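/- A set K ⊆ ℝ^d is Capra-convex if and only if K is a cone and ρ(K) = cl conv(ρ(K)) ∩ (S ∪ {0}), where S is the unit sphere of the source norm. -/

import Mathlib

open Classical in
noncomputable def radProj {d : ℕ} (N : EuclideanSpace ℝ (Fin d) → ℝ)
    (x : EuclideanSpace ℝ (Fin d)) : EuclideanSpace ℝ (Fin d) :=
  if x = 0 then 0 else (N x)⁻¹ • x

noncomputable def capraConj {d : ℕ} (N : EuclideanSpace ℝ (Fin d) → ℝ)
    (f : EuclideanSpace ℝ (Fin d) → EReal) (y : EuclideanSpace ℝ (Fin d)) : EReal :=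
  ⨆ x : EuclideanSpace ℝ (Fin d), ((inner ℝ (radProj N x) y : ℝ) : EReal) - f x

noncomputable def capraBiconj {d : ℕ} (N : EuclideanSpace ℝ (Fin d) → ℝ)
    (f : EuclideanSpace ℝ (Fin d) → EReal) (x : EuclideanSpace ℝ (Fin d)) : EReal :=
  ⨆ y : EuclideanSpace ℝ (Fin d), ((inner ℝ (radProj N x) y : ℝ) : EReal) - capraConj N f y

open Classical in
noncomputable def ind {d : ℕ} (X : Set (EuclideanSpace ℝ (Fin d)))
    (x : EuclideanSpace ℝ (Fin d)) : EReal :=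
  if x ∈ X then 0 else ⊤

def IsCapraConvex {d : ℕ} (N : EuclideanSpace ℝ (Fin d) → ℝ)
    (X : Set (EuclideanSpace ℝ (Fin d))) : Prop :=
  ind X = capraBiconj N (ind X)

def coneHull {d : ℕ} (A : Set (EuclideanSpace ℝ (Fin d))) : Set (EuclideanSpace ℝ (Fin d)) :=
  {y | ∃ a ∈ A, ∃ l : ℝ, 0 < l ∧ y = l • a}
/-!
The Capra-conjugate of `ind K` is the support function of `ρ(K)`, hence also of
`C = cl conv ρ(K)`. Its biconjugate at `x` only sees `ρ(x)`: it is `0` when `ρ(x) ∈ C`, and when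
`ρ(x) ∉ C` a separating hyperplane `⟪·, w⟫` makes the terms at `y = t • w` grow linearly in `t`.
So `K` is Capra-convex iff `K = ρ⁻¹(C)`. For a set `C`, the equality `K = ρ⁻¹(C)` says exactly
that `K` is a cone and `ρ(K) = C ∩ (S ∪ {0})`, because `ρ` fixes `S ∪ {0}` and, on a cone,
`x ∈ K ↔ ρ(x) ∈ K`.
-/

theorem exists_inner_lt_of_notMem {F : Type*} [NormedAddCommGroup F] [InnerProductSpace ℝ F]
    [CompleteSpace F] {C : Set F} {x : F} (hC : Convex ℝ C) (hCc : IsClosed C) (hx : x ∉ C) :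
    ∃ (w : F) (r : ℝ), (∀ v ∈ C, inner ℝ v w < r) ∧ r < inner ℝ x w := by
  obtain ⟨f, r, hfC, hfx⟩ := geometric_hahn_banach_closed_point hC hCc hx
  have hf : ∀ v, f v = inner ℝ v ((InnerProductSpace.toDual ℝ F).symm f) := fun v => by
    rw [real_inner_comm, InnerProductSpace.toDual_symm_apply]
  exact ⟨_, r, fun v hv => hf v ▸ hfC v hv, hf x ▸ hfx⟩

theorem inner_le_of_mem_closure_convexHull {F : Type*} [NormedAddCommGroup F]
    [InnerProductSpace ℝ F] {A : Set F} {w : F} {r : ℝ} (hA : ∀ a ∈ A, inner ℝ a w ≤ r)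
    {v : F} (hv : v ∈ closure (convexHull ℝ A)) : inner ℝ v w ≤ r := by
  have hclosed : IsClosed {u : F | inner ℝ u w ≤ r} :=
    isClosed_le (continuous_id.inner continuous_const) continuous_const
  have hconvex : Convex ℝ {u : F | inner ℝ u w ≤ r} :=
    convex_halfSpace_le ((innerₗ F).flip w).isLinear r
  exact closure_minimal (convexHull_min hA hconvex) hclosed hv

section Capra

variable {d : ℕ} {N : EuclideanSpace ℝ (Fin d) → ℝ}

local notation "E" => EuclideanSpace ℝ (Fin d)

theorem radProj_zero : radProj N (0 : E) = 0 := by simp [radProj]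

theorem radProj_eq_self_of_mem_sphere_union_zero {u : E} (hu : u ∈ {x : E | N x = 1} ∪ {0}) :
    radProj N u = u := by
  rcases hu with hu | rfl
  · by_cases h : u = 0 <;> simp_all [radProj]
  · exact radProj_zero

theorem radProj_smul (hNh : ∀ (a : ℝ) (x : E), N (a • x) = |a| * N x) {l : ℝ} (hl : 0 < l)
    (x : E) : radProj N (l • x) = radProj N x := by
  by_cases hx : x = 0
  · simp [hx]
  · rw [radProj, radProj, if_neg (smul_ne_zero hl.ne' hx), if_neg hx, hNh, abs_of_pos hl,
      smul_smul]
    congr 1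
    field_simp

theorem smul_radProj (hN0 : ∀ x : E, N x = 0 ↔ x = 0) (x : E) : N x • radProj N x = x := by
  by_cases hx : x = 0
  · simp [hx, radProj_zero]
  · rw [radProj, if_neg hx, smul_smul, mul_inv_cancel₀ (mt (hN0 x).mp hx), one_smul]

theorem apply_pos_of_ne_zero (hN0 : ∀ x : E, N x = 0 ↔ x = 0)
    (hNh : ∀ (a : ℝ) (x : E), N (a • x) = |a| * N x)
    (hNt : ∀ x y : E, N (x + y) ≤ N x + N y) {x : E} (hx : x ≠ 0) : 0 < N x := by
  have hneg : N (-x) = N x := by simpa using hNh (-1) x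
  have h0 : N 0 = 0 := (hN0 0).mpr rfl
  have := hNt x (-x)
  rw [add_neg_cancel, h0, hneg] at this
  exact lt_of_le_of_ne (by linarith) (Ne.symm (mt (hN0 x).mp hx))

theorem radProj_mem_sphere_union_zero (hN0 : ∀ x : E, N x = 0 ↔ x = 0)
    (hNh : ∀ (a : ℝ) (x : E), N (a • x) = |a| * N x)
    (hNt : ∀ x y : E, N (x + y) ≤ N x + N y) (x : E) :
    radProj N x ∈ {x : E | N x = 1} ∪ {0} := by
  by_cases hx : x = 0
  · exact Or.inr (by simp [hx, radProj_zero])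
  · have hpos := apply_pos_of_ne_zero hN0 hNh hNt hx
    refine Or.inl ?_
    simp only [Set.mem_ofPred_eq, radProj, if_neg hx, hNh, abs_inv, abs_of_pos hpos]
    exact inv_mul_cancel₀ hpos.ne'

theorem radProj_mem_iff_of_cone (hN0 : ∀ x : E, N x = 0 ↔ x = 0)
    (hNh : ∀ (a : ℝ) (x : E), N (a • x) = |a| * N x)
    (hNt : ∀ x y : E, N (x + y) ≤ N x + N y) {K : Set E}
    (hK : ∀ l : ℝ, 0 < l → ∀ x ∈ K, l • x ∈ K) {x : E} : radProj N x ∈ K ↔ x ∈ K := by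
  by_cases hx : x = 0
  · rw [hx, radProj_zero]
  have hpos := apply_pos_of_ne_zero hN0 hNh hNt hx
  refine ⟨fun h => smul_radProj hN0 x ▸ hK _ hpos _ h, fun h => ?_⟩
  rw [radProj, if_neg hx]
  exact hK _ (inv_pos.mpr hpos) x h

theorem eq_preimage_radProj_iff (hN0 : ∀ x : E, N x = 0 ↔ x = 0)
    (hNh : ∀ (a : ℝ) (x : E), N (a • x) = |a| * N x)
    (hNt : ∀ x y : E, N (x + y) ≤ N x + N y) {K C : Set E} :
    K = radProj N ⁻¹' C ↔
      (∀ l : ℝ, 0 < l → ∀ x ∈ K, l • x ∈ K) ∧ radProj N '' K = C ∩ ({x : E | N x = 1} ∪ {0}) := by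
  constructor
  · rintro rfl
    refine ⟨fun l hl x hx => by rwa [Set.mem_preimage, radProj_smul hNh hl], ?_⟩
    ext u
    refine ⟨?_, fun ⟨huC, hu⟩ => ⟨u, ?_, radProj_eq_self_of_mem_sphere_union_zero hu⟩⟩
    · rintro ⟨x, hx, rfl⟩
      exact ⟨hx, radProj_mem_sphere_union_zero hN0 hNh hNt x⟩
    · rwa [Set.mem_preimage, radProj_eq_self_of_mem_sphere_union_zero hu]
  · rintro ⟨hK, hKC⟩
    ext x
    refine ⟨fun hx => (hKC ▸ Set.mem_image_of_mem _ hx).1, fun hx => ?_⟩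
    obtain ⟨x', hx', hxx'⟩ : radProj N x ∈ radProj N '' K :=
      hKC ▸ ⟨hx, radProj_mem_sphere_union_zero hN0 hNh hNt x⟩
    rw [← radProj_mem_iff_of_cone hN0 hNh hNt hK, ← hxx']
    exact (radProj_mem_iff_of_cone hN0 hNh hNt hK).mpr hx'

theorem ind_inj {X Y : Set E} : ind X = ind Y ↔ X = Y := by
  refine ⟨fun h => Set.ext fun x => ?_, fun h => h ▸ rfl⟩
  have hx := congrFun h x
  by_cases hX : x ∈ X <;> by_cases hY : x ∈ Y <;> simp_all [ind]

theorem capraConj_ind_le_iff {K : Set E} {y : E} {c : EReal} :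
    capraConj N (ind K) y ≤ c ↔ ∀ x ∈ K, ((inner ℝ (radProj N x) y : ℝ) : EReal) ≤ c := by
  refine iSup_le_iff.trans (forall_congr' fun x => ?_)
  by_cases hx : x ∈ K <;> simp [ind, hx]

theorem inner_le_capraConj_ind {K : Set E} {x : E}
    (hx : radProj N x ∈ closure (convexHull ℝ (radProj N '' K))) (y : E) :
    ((inner ℝ (radProj N x) y : ℝ) : EReal) ≤ capraConj N (ind K) y := by
  refine EReal.le_of_forall_lt_iff_le.mp fun r hr => ?_
  have hK := capraConj_ind_le_iff.mp hr.le
  refine EReal.coe_le_coe_iff.mpr (inner_le_of_mem_closure_convexHull ?_ hx)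
  rintro _ ⟨x', hx', rfl⟩
  exact EReal.coe_le_coe_iff.mp (hK x' hx')

theorem capraBiconj_ind_of_mem {K : Set E} {x : E}
    (hx : radProj N x ∈ closure (convexHull ℝ (radProj N '' K))) :
    capraBiconj N (ind K) x = 0 := by
  refine le_antisymm (iSup_le fun y => EReal.sub_nonpos.mpr (inner_le_capraConj_ind hx y)) ?_
  have hconj0 : capraConj N (ind K) 0 ≤ 0 :=
    capraConj_ind_le_iff.mpr fun _ _ => by simp
  calc (0 : EReal) = ((inner ℝ (radProj N x) 0 : ℝ) : EReal) - 0 := by simp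
    _ ≤ ((inner ℝ (radProj N x) 0 : ℝ) : EReal) - capraConj N (ind K) 0 :=
      EReal.sub_le_sub le_rfl hconj0
    _ ≤ capraBiconj N (ind K) x :=
      le_iSup (fun y => ((inner ℝ (radProj N x) y : ℝ) : EReal) - capraConj N (ind K) y) 0

theorem capraBiconj_ind_of_notMem {K : Set E} {x : E}
    (hx : radProj N x ∉ closure (convexHull ℝ (radProj N '' K))) :
    capraBiconj N (ind K) x = ⊤ := by
  obtain ⟨w, r, hwC, hwx⟩ := exists_inner_lt_of_notMem (convex_convexHull ℝ _).closure
    isClosed_closure hx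
  have hgap : 0 < inner ℝ (radProj N x) w - r := sub_pos.mpr hwx
  have hterm : ∀ t : ℝ, 0 ≤ t → ((t * (inner ℝ (radProj N x) w - r) : ℝ) : EReal) ≤
      capraBiconj N (ind K) x := fun t ht => by
    have hconj : capraConj N (ind K) (t • w) ≤ ((t * r : ℝ) : EReal) := by
      refine capraConj_ind_le_iff.mpr fun x' hx' => EReal.coe_le_coe_iff.mpr ?_
      rw [real_inner_smul_right]
      exact mul_le_mul_of_nonneg_left
        (hwC _ (subset_closure (subset_convexHull ℝ _ ⟨x', hx', rfl⟩))).le ht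
    calc ((t * (inner ℝ (radProj N x) w - r) : ℝ) : EReal)
        = ((inner ℝ (radProj N x) (t • w) : ℝ) : EReal) - ((t * r : ℝ) : EReal) := by
          rw [real_inner_smul_right, ← EReal.coe_sub, mul_sub]
      _ ≤ ((inner ℝ (radProj N x) (t • w) : ℝ) : EReal) - capraConj N (ind K) (t • w) :=
          EReal.sub_le_sub le_rfl hconj
      _ ≤ capraBiconj N (ind K) x :=
          le_iSup (fun y => ((inner ℝ (radProj N x) y : ℝ) : EReal) - capraConj N (ind K) y) _
  refine (EReal.eq_top_iff_forall_lt _).mpr fun s => ?_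
  have ht : 0 ≤ |s| / (inner ℝ (radProj N x) w - r) + 1 := by positivity
  refine lt_of_lt_of_le (EReal.coe_lt_coe_iff.mpr ?_) (hterm _ ht)
  rw [add_mul, div_mul_cancel₀ _ hgap.ne', one_mul]
  linarith [le_abs_self s]

theorem capraBiconj_ind (K : Set E) :
    capraBiconj N (ind K) = ind (radProj N ⁻¹' closure (convexHull ℝ (radProj N '' K))) := by
  funext x
  by_cases hx : radProj N x ∈ closure (convexHull ℝ (radProj N '' K))
  · rw [capraBiconj_ind_of_mem hx, ind, if_pos (Set.mem_preimage.mpr hx)]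
  · rw [capraBiconj_ind_of_notMem hx, ind, if_neg (mt Set.mem_preimage.mp hx)]

theorem isCapraConvex_iff_eq_preimage {K : Set E} :
    IsCapraConvex N K ↔ K = radProj N ⁻¹' closure (convexHull ℝ (radProj N '' K)) := by
  rw [IsCapraConvex, capraBiconj_ind, ind_inj]

end Capra

theorem stmt {d : ℕ} (N : EuclideanSpace ℝ (Fin d) → ℝ)
    (hN0 : ∀ x : EuclideanSpace ℝ (Fin d), N x = 0 ↔ x = 0)
    (hNh : ∀ (a : ℝ) (x : EuclideanSpace ℝ (Fin d)), N (a • x) = |a| * N x)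
    (hNt : ∀ x y : EuclideanSpace ℝ (Fin d), N (x + y) ≤ N x + N y)
    (K : Set (EuclideanSpace ℝ (Fin d))) :
    IsCapraConvex N K ↔
      ((∀ l : ℝ, 0 < l → ∀ x ∈ K, l • x ∈ K) ∧
        radProj N '' K =
          closure (convexHull ℝ (radProj N '' K)) ∩ ({x : EuclideanSpace ℝ (Fin d) | N x = 1} ∪ {0})) := by
  rw [isCapraConvex_iff_eq_preimage, eq_preimage_radProj_iff hN0 hNh hNt]
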